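/- Let (G, γ) and (T, η) be countable sets equipped with binary relations (directed graphs), both unary FA-presentable, and let g ∈ G and t ∈ T be distinguished vertices. Let ~ be the equivalence relation on the disjoint union G ⊕ T generated by the single pair (inl g, inr t), and let A = (G ⊕ T)/~ carry the induced edge relation α, where α relates the class of u to the class of v if and only if there exist u' ~ u and v' ~ v that are both in G and related by γ, or both in T and related by η. Then the attachment (A, α) of (T, η) at t to the vertex g of (G, γ) is unary FA-presentable. -/

import Mathlib

/-- The convolution word of the pair `(m, n)`, over the three-letter alphabet `Fin 3`
(`0` plays the role of `s`, `1` of `l`, `2` of `r`). -/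
def convWord (m n : ℕ) : List (Fin 3) :=
  List.replicate (min m n) 0 ++ List.replicate (m - min m n) 1 ++
    List.replicate (n - min m n) 2

/-- The convolution language of a binary relation on `ℕ`. -/
def convLang (R : ℕ → ℕ → Prop) : Language (Fin 3) :=
  {w | ∃ m n, R m n ∧ w = convWord m n}

/-- A binary relation on `ℕ` is regular if its convolution language is regular. -/
def RegularRel (R : ℕ → ℕ → Prop) : Prop :=
  (convLang R).IsRegular
/-- The unary language over a one-letter alphabet associated to a set `L ⊆ ℕ`,
identifying `a^n` with `n`. -/
def unaryLang (L : Set ℕ) : Language Unit :=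
  {w | w.length ∈ L}

/-- A (countable) structure `(X, ρ)` with one binary relation is unary FA-presentable
if there are a set `L ⊆ ℕ` whose unary language is regular and a surjection
`φ : L → X` such that equality and the relation, pulled back along `φ`, are
regular relations. -/
def UnaryFAPresentable {X : Type*} (ρ : X → X → Prop) : Prop :=
  ∃ L : Set ℕ, (unaryLang L).IsRegular ∧
    ∃ φ : ℕ → X, (∀ x, ∃ n ∈ L, φ n = x) ∧
      RegularRel (fun m n => m ∈ L ∧ n ∈ L ∧ φ m = φ n) ∧
      RegularRel (fun m n => m ∈ L ∧ n ∈ L ∧ ρ (φ m) (φ n))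

/-- The equivalence relation on `G ⊕ T` generated by the single pair `(inl g, inr t)`. -/
def attachRel {G T : Type*} (g : G) (t : T) : (G ⊕ T) → (G ⊕ T) → Prop :=
  Relation.EqvGen (fun u v => u = Sum.inl g ∧ v = Sum.inr t)

/-- The corresponding setoid on `G ⊕ T`. -/
def attachSetoid {G T : Type*} (g : G) (t : T) : Setoid (G ⊕ T) :=
  ⟨attachRel g t, Relation.EqvGen.is_equivalence _⟩

/-- The edge relation on the attachment of `(T, η)` at `t` to the vertex `g` of
`(G, γ)`: classes are related iff they contain representatives that are both in
`G` and `γ`-related, or both in `T` and `η`-related. -/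
def attachEdge {G T : Type*} (γ : G → G → Prop) (η : T → T → Prop) (g : G) (t : T)
    (a b : Quotient (attachSetoid g t)) : Prop :=
  (∃ u v : G, Quotient.mk (attachSetoid g t) (Sum.inl u) = a ∧
    Quotient.mk (attachSetoid g t) (Sum.inl v) = b ∧ γ u v) ∨
  (∃ u v : T, Quotient.mk (attachSetoid g t) (Sum.inr u) = a ∧
    Quotient.mk (attachSetoid g t) (Sum.inr v) = b ∧ η u v)

/-!
Number the attachment through `ℕ ⊕ ℕ ≃ ℕ`, even numbers coding `G` and odd numbers coding `T`.
Its equality and its edge relation split into four blocks, each a finite union of a relation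
of `G` or `T` with rectangles `A × B` whose sides are sections of those relations at the glued
vertices. It remains to see that regular relations are closed under these constructions.

For this, count left quotients (Myhill–Nerode). Reading `conv(m, n)` letter by letter, every
left quotient of the convolution language of `R` is the convolution language of a diagonal
shift `R (k + ·) (k + ·)`, of a shift of a section `{m | R (k + m) k}` or `{n | R k (k + n)}`
laid on an axis, or of the empty relation. So `R` is regular iff it has finitely many diagonal
shifts and these sections are unary regular, i.e. have finitely many shifts; and each closure
property becomes a count of shifts.
-/

open Set List

section FiniteRange

variable {ι α β γ : Type*}

theorem finite_range_of_forall_eq {f : ι → γ} {g : ι → α} {h : ι → β} (Φ : α → β → γ)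
    (hf : ∀ i, f i = Φ (g i) (h i)) (hg : (range g).Finite) (hh : (range h).Finite) :
    (range f).Finite :=
  (hg.image2 Φ hh).subset <| by rintro _ ⟨i, rfl⟩; exact ⟨_, ⟨i, rfl⟩, _, ⟨i, rfl⟩, (hf i).symm⟩

theorem finite_range_of_forall_eq_mod_two {f : ℕ → γ} {g : ℕ → β} (Φ : ℕ → β → γ)
    (hf : ∀ k, f k = Φ (k % 2) (g (k / 2))) (hg : (range g).Finite) : (range f).Finite :=
  finite_range_of_forall_eq Φ hf ((finite_Iio 2).subset <| by
    rintro _ ⟨k, rfl⟩; exact Nat.mod_lt _ two_pos) (hg.subset <| range_comp_subset_range _ g)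

end FiniteRange

theorem Language.IsRegular.leftQuotient {α : Type*} {L : Language α} (h : L.IsRegular)
    (u : List α) : (L.leftQuotient u).IsRegular :=
  .of_finite_range_leftQuotient <| h.finite_range_leftQuotient.subset <| by
    rintro _ ⟨v, rfl⟩; exact ⟨u ++ v, L.leftQuotient_append u v⟩

theorem Language.IsRegular.preimage_map {α β : Type} {L : Language β} (h : L.IsRegular)
    (f : α → β) : Language.IsRegular (List.map f ⁻¹' L) := by
  obtain ⟨σ, _, M, rfl⟩ := h
  exact ⟨σ, inferInstance, M.comap f, M.accepts_comap f⟩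

section Unary

theorem replicate_mem_unaryLang {A : Set ℕ} {n : ℕ} :
    replicate n () ∈ unaryLang A ↔ n ∈ A := by
  show (replicate n ()).length ∈ A ↔ n ∈ A
  rw [length_replicate]

theorem unaryLang_injective : Function.Injective unaryLang := fun A B h => by
  ext n
  have := congrArg (replicate n () ∈ ·) h
  simpa only [replicate_mem_unaryLang, eq_iff_iff] using this

theorem unaryLang_union (A B : Set ℕ) : unaryLang (A ∪ B) = unaryLang A + unaryLang B := rfl

theorem leftQuotient_unaryLang (A : Set ℕ) (u : List Unit) :
    (unaryLang A).leftQuotient u = unaryLang ((u.length + ·) ⁻¹' A) := by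
  ext w
  show (u ++ w).length ∈ A ↔ u.length + w.length ∈ A
  rw [length_append]

theorem isRegular_unaryLang_iff {A : Set ℕ} :
    (unaryLang A).IsRegular ↔ (range fun k => (k + ·) ⁻¹' A).Finite := by
  have : range (unaryLang A).leftQuotient = unaryLang '' range fun k => (k + ·) ⁻¹' A := by
    ext L
    simp only [Set.mem_range, mem_image, exists_exists_eq_and, leftQuotient_unaryLang]
    exact ⟨fun ⟨u, hu⟩ => ⟨u.length, hu⟩,
      fun ⟨k, hk⟩ => ⟨replicate k (), by simpa using hk⟩⟩
  rw [Language.isRegular_iff_finite_range_leftQuotient, this,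
    finite_image_iff unaryLang_injective.injOn]

variable {A : Set ℕ}

theorem isRegular_unaryLang_preimage_add (hA : (unaryLang A).IsRegular) (c : ℕ) :
    (unaryLang ((c + ·) ⁻¹' A)).IsRegular := by
  rw [isRegular_unaryLang_iff] at *
  exact hA.subset <| by rintro _ ⟨k, rfl⟩; exact ⟨c + k, by ext; simp [add_assoc]⟩

theorem isRegular_unaryLang_and_const (hA : (unaryLang A).IsRegular) (p : Prop) :
    (unaryLang {m | m ∈ A ∧ p}).IsRegular := by
  rw [isRegular_unaryLang_iff] at *
  exact (hA.image fun B => {m | m ∈ B ∧ p}).subset <| by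
    rintro _ ⟨k, rfl⟩; exact ⟨_, ⟨k, rfl⟩, rfl⟩

theorem isRegular_unaryLang_mod_two (hA : (unaryLang A).IsRegular) (x : ℕ) :
    (unaryLang {m | m % 2 = x ∧ m / 2 ∈ A}).IsRegular := by
  rw [isRegular_unaryLang_iff] at *
  refine finite_range_of_forall_eq_mod_two
    (fun b B => {m | (b + m) % 2 = x ∧ (b + m) / 2 ∈ B}) (fun k => ?_) hA
  ext m
  simp only [mem_preimage, mem_ofPred_eq]
  rw [show (k + m) / 2 = k / 2 + (k % 2 + m) / 2 by omega,
    show (k + m) % 2 = (k % 2 + m) % 2 by omega]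

theorem isRegular_unaryLang_sum {B : Set ℕ} (hA : (unaryLang A).IsRegular)
    (hB : (unaryLang B).IsRegular) :
    (unaryLang
      (Equiv.natSumNatEquivNat.symm ⁻¹' (Sum.inl '' A ∪ Sum.inr '' B))).IsRegular := by
  convert (isRegular_unaryLang_mod_two hA 0).add (isRegular_unaryLang_mod_two hB 1) using 1
  rw [← unaryLang_union]
  congr 1
  ext n
  obtain ⟨x | x, rfl⟩ := Equiv.natSumNatEquivNat.surjective n <;>
    simp [Equiv.natSumNatEquivNat_apply, Nat.mul_add_div]

end Unary

section ConvWord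

@[simp] theorem convWord_zero_left (n : ℕ) : convWord 0 n = replicate n 2 := by simp [convWord]

@[simp] theorem convWord_zero_right (m : ℕ) : convWord m 0 = replicate m 1 := by simp [convWord]

@[simp] theorem convWord_succ_succ (m n : ℕ) : convWord (m + 1) (n + 1) = 0 :: convWord m n := by
  simp [convWord, Nat.succ_min_succ, replicate_succ]

theorem convWord_inj {m n m' n' : ℕ} : convWord m n = convWord m' n' ↔ m = m' ∧ n = n' := by
  refine ⟨fun h => ?_, fun ⟨hm, hn⟩ => hm ▸ hn ▸ rfl⟩
  have c0 := congrArg (count 0) h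
  have c1 := congrArg (count 1) h
  have c2 := congrArg (count 2) h
  simp [convWord, count_replicate] at c0 c1 c2
  omega

theorem convWord_mem_convLang {R : ℕ → ℕ → Prop} {m n : ℕ} :
    convWord m n ∈ convLang R ↔ R m n :=
  ⟨fun ⟨_, _, hR, h⟩ => by rwa [(convWord_inj.1 h).1, (convWord_inj.1 h).2],
    fun h => ⟨m, n, h, rfl⟩⟩

theorem convLang_injective : Function.Injective convLang := fun R S h => by
  ext m n
  have := congrArg (convWord m n ∈ ·) h
  simpa only [convWord_mem_convLang, eq_iff_iff] using this

theorem leftQuotient_convLang_zero (R : ℕ → ℕ → Prop) :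
    (convLang R).leftQuotient [0] = convLang fun m n => R (m + 1) (n + 1) := by
  ext w
  constructor
  · rintro ⟨_ | m, _ | n, hR, h⟩
    all_goals simp [replicate_succ] at h
    exact h ▸ ⟨m, n, hR, rfl⟩
  · rintro ⟨m, n, hR, rfl⟩
    exact ⟨m + 1, n + 1, hR, (convWord_succ_succ m n).symm⟩

theorem leftQuotient_convLang_one (R : ℕ → ℕ → Prop) :
    (convLang R).leftQuotient [1] = convLang fun m n => n = 0 ∧ R (m + 1) 0 := by
  ext w
  constructor
  · rintro ⟨_ | m, _ | n, hR, h⟩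
    all_goals simp [replicate_succ] at h
    exact ⟨m, 0, ⟨rfl, hR⟩, by rw [h, convWord_zero_right]⟩
  · rintro ⟨m, n, ⟨rfl, hR⟩, rfl⟩
    exact ⟨m + 1, 0, hR, by simp [replicate_succ]⟩

theorem leftQuotient_convLang_two (R : ℕ → ℕ → Prop) :
    (convLang R).leftQuotient [2] = convLang fun m n => m = 0 ∧ R 0 (n + 1) := by
  ext w
  constructor
  · rintro ⟨_ | m, _ | n, hR, h⟩
    all_goals simp [replicate_succ] at h
    exact ⟨0, n, ⟨rfl, hR⟩, by rw [h, convWord_zero_left]⟩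
  · rintro ⟨m, n, ⟨rfl, hR⟩, rfl⟩
    exact ⟨0, n + 1, hR, by simp [replicate_succ]⟩

theorem leftQuotient_convLang_replicate_zero (R : ℕ → ℕ → Prop) (k : ℕ) :
    (convLang R).leftQuotient (replicate k 0) = convLang fun m n => R (k + m) (k + n) := by
  induction k with
  | zero => simp
  | succ k ih =>
    rw [replicate_succ', Language.leftQuotient_append, ih, leftQuotient_convLang_zero]
    simp only [Nat.add_right_comm _ 1]
    rfl

end ConvWord

namespace RegularRel

variable {R S : ℕ → ℕ → Prop}

theorem congr (h : RegularRel R) (hRS : ∀ m n, R m n ↔ S m n) : RegularRel S := by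
  rwa [show S = R from funext₂ fun m n => propext (hRS m n).symm]

theorem shift (h : RegularRel R) (k : ℕ) : RegularRel fun m n => R (k + m) (k + n) := by
  unfold RegularRel
  exact leftQuotient_convLang_replicate_zero R k ▸ h.leftQuotient _

theorem finite_range_shift (h : RegularRel R) : (range fun k m n => R (k + m) (k + n)).Finite := by
  refine Finite.of_finite_image (h.finite_range_leftQuotient.subset ?_) convLang_injective.injOn
  rintro _ ⟨_, ⟨k, rfl⟩, rfl⟩
  exact ⟨replicate k 0, leftQuotient_convLang_replicate_zero R k⟩

theorem isRegular_unaryLang_fst_zero (h : RegularRel R) : (unaryLang {m | R m 0}).IsRegular := by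
  have : unaryLang {m | R m 0} = List.map (fun _ => (1 : Fin 3)) ⁻¹' convLang R := by
    ext w
    show w.length ∈ {m | R m 0} ↔ w.map _ ∈ convLang R
    rw [map_const', ← convWord_zero_right, convWord_mem_convLang]
    rfl
  exact this ▸ h.preimage_map _

theorem isRegular_unaryLang_snd_zero (h : RegularRel R) : (unaryLang {n | R 0 n}).IsRegular := by
  have : unaryLang {n | R 0 n} = List.map (fun _ => (2 : Fin 3)) ⁻¹' convLang R := by
    ext w
    show w.length ∈ {n | R 0 n} ↔ w.map _ ∈ convLang R
    rw [map_const', ← convWord_zero_left, convWord_mem_convLang]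
    rfl
  exact this ▸ h.preimage_map _

end RegularRel

section Residuals

variable {R : ℕ → ℕ → Prop}

/-- The relations whose convolution languages are the left quotients of `convLang R` by `s^k`
(diagonal shifts), by `s^k l^i` and `s^k r^i` (shifted sections on an axis), and by all other
words (empty). -/
def convResiduals (R : ℕ → ℕ → Prop) : Set (ℕ → ℕ → Prop) :=
  let D := range fun k m n => R (k + m) (k + n)
  D ∪ (⋃ S ∈ D, range fun i m n => n = 0 ∧ S (i + m) 0) ∪
    (⋃ S ∈ D, range fun i m n => m = 0 ∧ S 0 (i + n)) ∪ {fun _ _ => False}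

theorem leftQuotient_mem_convResiduals {S : ℕ → ℕ → Prop} (hS : S ∈ convResiduals R)
    (c : Fin 3) : (convLang S).leftQuotient [c] ∈ convLang '' convResiduals R := by
  have mem : ∀ {S S'}, S' ∈ convResiduals R → (∀ m n, S m n ↔ S' m n) →
      convLang S ∈ convLang '' convResiduals R :=
    fun hS' h => ⟨_, hS', congrArg convLang (funext₂ fun m n => propext (h m n)).symm⟩
  have hdiag : ∀ k, (fun m n => R (k + m) (k + n)) ∈ convResiduals R := fun k => by
    simp [convResiduals]
  have hlineL : ∀ k i, (fun m n => n = 0 ∧ R (k + (i + m)) k) ∈ convResiduals R := by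
    intro k i
    simp only [convResiduals, mem_union, mem_iUnion]
    exact Or.inl (Or.inl (Or.inr ⟨_, ⟨k, rfl⟩, i, rfl⟩))
  have hlineR : ∀ k i, (fun m n => m = 0 ∧ R k (k + (i + n))) ∈ convResiduals R := by
    intro k i
    simp only [convResiduals, mem_union, mem_iUnion]
    exact Or.inl (Or.inr ⟨_, ⟨k, rfl⟩, i, rfl⟩)
  have hdead : (fun _ _ => False) ∈ convResiduals R := by simp [convResiduals]
  simp only [convResiduals, mem_union, mem_iUnion, Set.mem_range, mem_singleton_iff] at hS
  rcases hS with
    (((⟨k, rfl⟩ | ⟨_, ⟨k, rfl⟩, i, rfl⟩) | ⟨_, ⟨k, rfl⟩, i, rfl⟩) | rfl) <;>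
    fin_cases c <;>
    simp only [Fin.zero_eta, Fin.mk_one, Fin.reduceFinMk, leftQuotient_convLang_zero,
      leftQuotient_convLang_one, leftQuotient_convLang_two]
  -- a diagonal shift, an `l`-line, an `r`-line or the empty relation, followed by `s`, `l` or `r`
  · exact mem (hdiag (k + 1)) fun m n => by ring_nf
  · exact mem (hlineL k 1) fun m n => by ring_nf
  · exact mem (hlineR k 1) fun m n => by ring_nf
  · exact mem hdead fun m n => by simp
  · exact mem (hlineL k (i + 1)) fun m n => by rw [true_and]; ring_nf
  · exact mem hdead fun m n => by simp
  · exact mem hdead fun m n => by simp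
  · exact mem hdead fun m n => by simp
  · exact mem (hlineR k (i + 1)) fun m n => by rw [true_and]; ring_nf
  all_goals exact mem hdead fun m n => by simp

theorem finite_convResiduals (hD : (range fun k m n => R (k + m) (k + n)).Finite)
    (hl : ∀ k, (unaryLang {m | R (k + m) k}).IsRegular)
    (hr : ∀ k, (unaryLang {n | R k (k + n)}).IsRegular) : (convResiduals R).Finite := by
  refine ((hD.union (hD.biUnion ?_)).union (hD.biUnion ?_)).union (finite_singleton _)
  · rintro _ ⟨k, rfl⟩
    exact ((isRegular_unaryLang_iff.1 (hl k)).image fun B m n => n = 0 ∧ m ∈ B).subset <| by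
      rintro _ ⟨i, rfl⟩; exact ⟨_, ⟨i, rfl⟩, rfl⟩
  · rintro _ ⟨k, rfl⟩
    exact ((isRegular_unaryLang_iff.1 (hr k)).image fun B m n => m = 0 ∧ n ∈ B).subset <| by
      rintro _ ⟨i, rfl⟩; exact ⟨_, ⟨i, rfl⟩, rfl⟩

theorem regularRel_of_finite_range_shift (hD : (range fun k m n => R (k + m) (k + n)).Finite)
    (hl : ∀ k, (unaryLang {m | R (k + m) k}).IsRegular)
    (hr : ∀ k, (unaryLang {n | R k (k + n)}).IsRegular) : RegularRel R := by
  refine .of_finite_range_leftQuotient <| ((finite_convResiduals hD hl hr).image convLang).subset ?_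
  rintro _ ⟨u, rfl⟩
  induction u using List.reverseRecOn with
  | nil => exact ⟨R, Or.inl (Or.inl (Or.inl ⟨0, by simp⟩)), rfl⟩
  | append_singleton u c ih =>
    obtain ⟨S, hS, hSu⟩ := ih
    rw [Language.leftQuotient_append, ← hSu]
    exact leftQuotient_mem_convResiduals hS c

end Residuals

namespace RegularRel

variable {R S : ℕ → ℕ → Prop}

theorem flip (h : RegularRel R) : RegularRel fun m n => R n m :=
  regularRel_of_finite_range_shift
    ((h.finite_range_shift.image fun S m n => S n m).subset <| by
      rintro _ ⟨k, rfl⟩; exact ⟨_, ⟨k, rfl⟩, rfl⟩)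
    (fun k => (h.shift k).isRegular_unaryLang_snd_zero)
    (fun k => (h.shift k).isRegular_unaryLang_fst_zero)

theorem isRegular_unaryLang_fst (h : RegularRel R) (n : ℕ) :
    (unaryLang {m | R m n}).IsRegular := by
  rw [isRegular_unaryLang_iff]
  refine (((finite_Iio n).image fun k => (k + ·) ⁻¹' {m | R m n}).union
    (isRegular_unaryLang_iff.1 (h.shift n).isRegular_unaryLang_fst_zero)).subset ?_
  rintro _ ⟨k, rfl⟩
  rcases lt_or_ge k n with hk | hk
  · exact Or.inl ⟨k, hk, rfl⟩
  · obtain ⟨i, rfl⟩ := Nat.exists_eq_add_of_le hk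
    exact Or.inr ⟨i, by ext; simp [add_assoc]⟩

theorem isRegular_unaryLang_snd (h : RegularRel R) (m : ℕ) :
    (unaryLang {n | R m n}).IsRegular :=
  h.flip.isRegular_unaryLang_fst m

theorem or (hR : RegularRel R) (hS : RegularRel S) : RegularRel fun m n => R m n ∨ S m n := by
  have : convLang (fun m n => R m n ∨ S m n) = convLang R + convLang S := by
    ext w
    simp only [convLang, or_and_right, exists_or]
    rfl
  unfold RegularRel
  rw [this]
  exact hR.add hS

theorem mod_two (h : RegularRel R) (x y : ℕ) :
    RegularRel fun m n => m % 2 = x ∧ n % 2 = y ∧ R (m / 2) (n / 2) := by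
  refine regularRel_of_finite_range_shift (finite_range_of_forall_eq_mod_two
    (fun b S m n => (b + m) % 2 = x ∧ (b + n) % 2 = y ∧ S ((b + m) / 2) ((b + n) / 2))
    (fun k => ?_) h.finite_range_shift) (fun k => ?_) (fun k => ?_)
  · ext m n
    rw [show (k + m) / 2 = k / 2 + (k % 2 + m) / 2 by omega,
      show (k + n) / 2 = k / 2 + (k % 2 + n) / 2 by omega,
      show (k + m) % 2 = (k % 2 + m) % 2 by omega, show (k + n) % 2 = (k % 2 + n) % 2 by omega]
  · convert isRegular_unaryLang_preimage_add (isRegular_unaryLang_and_const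
      (isRegular_unaryLang_mod_two (h.isRegular_unaryLang_fst (k / 2)) x) (k % 2 = y)) k using 2
    ext m
    simp only [mem_ofPred_eq, mem_preimage]
    tauto
  · convert isRegular_unaryLang_preimage_add (isRegular_unaryLang_and_const
      (isRegular_unaryLang_mod_two (h.isRegular_unaryLang_snd (k / 2)) y) (k % 2 = x)) k using 2
    ext n
    simp only [mem_ofPred_eq, mem_preimage]
    tauto

end RegularRel

theorem regularRel_mem_and_mem {A B : Set ℕ} (hA : (unaryLang A).IsRegular)
    (hB : (unaryLang B).IsRegular) : RegularRel fun m n => m ∈ A ∧ n ∈ B :=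
  regularRel_of_finite_range_shift
    (finite_range_of_forall_eq (fun A' B' m n => m ∈ A' ∧ n ∈ B') (fun k => rfl)
      (isRegular_unaryLang_iff.1 hA) (isRegular_unaryLang_iff.1 hB))
    (fun k => isRegular_unaryLang_and_const (isRegular_unaryLang_preimage_add hA k) _)
    (fun k => by
      simpa only [and_comm, mem_preimage] using
        isRegular_unaryLang_and_const (isRegular_unaryLang_preimage_add hB k) (k ∈ A))

section Sum

open Equiv

structure BlockRegular (Q : ℕ ⊕ ℕ → ℕ ⊕ ℕ → Prop) : Prop where
  inl_inl : RegularRel fun a b => Q (.inl a) (.inl b)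
  inl_inr : RegularRel fun a b => Q (.inl a) (.inr b)
  inr_inl : RegularRel fun a b => Q (.inr a) (.inl b)
  inr_inr : RegularRel fun a b => Q (.inr a) (.inr b)

theorem BlockRegular.regularRel {Q : ℕ ⊕ ℕ → ℕ ⊕ ℕ → Prop} (h : BlockRegular Q) :
    RegularRel fun m n => Q (natSumNatEquivNat.symm m) (natSumNatEquivNat.symm n) := by
  convert ((h.inl_inl.mod_two 0 0).or (h.inl_inr.mod_two 0 1)).or
    ((h.inr_inl.mod_two 1 0).or (h.inr_inr.mod_two 1 1)) using 3 with m n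
  obtain ⟨x | x, rfl⟩ := natSumNatEquivNat.surjective m <;>
    obtain ⟨y | y, rfl⟩ := natSumNatEquivNat.surjective n <;>
    simp [natSumNatEquivNat_apply, Nat.mul_add_div]

theorem unaryFAPresentable_of_sum {X : Type*} {ρ : X → X → Prop} {A B : Set ℕ}
    (hA : (unaryLang A).IsRegular) (hB : (unaryLang B).IsRegular) (ψ : ℕ ⊕ ℕ → X)
    (hψ : ∀ x, ∃ y ∈ Sum.inl '' A ∪ Sum.inr '' B, ψ y = x)
    (hE : BlockRegular fun x y => x ∈ Sum.inl '' A ∪ Sum.inr '' B ∧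
      y ∈ Sum.inl '' A ∪ Sum.inr '' B ∧ ψ x = ψ y)
    (hρ : BlockRegular fun x y => x ∈ Sum.inl '' A ∪ Sum.inr '' B ∧
      y ∈ Sum.inl '' A ∪ Sum.inr '' B ∧ ρ (ψ x) (ψ y)) :
    UnaryFAPresentable ρ := by
  refine ⟨_, isRegular_unaryLang_sum hA hB, ψ ∘ natSumNatEquivNat.symm, fun x => ?_,
    hE.regularRel, hρ.regularRel⟩
  obtain ⟨y, hy, rfl⟩ := hψ x
  exact ⟨natSumNatEquivNat y, by rwa [mem_preimage, symm_apply_apply],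
    congrArg ψ (natSumNatEquivNat.symm_apply_apply y)⟩

end Sum

section Attachment

variable {G T : Type*}

theorem attachRel_iff {g : G} {t : T} {a b : G ⊕ T} : attachRel g t a b ↔
    a = b ∨ (a = .inl g ∧ b = .inr t) ∨ (a = .inr t ∧ b = .inl g) := by
  constructor
  · intro h
    induction h with
    | rel _ _ h => exact Or.inr (Or.inl h)
    | refl => exact Or.inl rfl
    | symm | trans => grind
  · rintro (rfl | ⟨rfl, rfl⟩ | ⟨rfl, rfl⟩)
    · exact .refl _
    · exact .rel _ _ ⟨rfl, rfl⟩
    · exact .symm _ _ (.rel _ _ ⟨rfl, rfl⟩)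

variable {g : G} {t : T}

@[simp] theorem mk_inl_eq_mk_inl {u v : G} : Quotient.mk (attachSetoid g t) (.inl u) =
    Quotient.mk (attachSetoid g t) (.inl v) ↔ u = v :=
  Quotient.eq.trans <| attachRel_iff.trans <| by simp

@[simp] theorem mk_inl_eq_mk_inr {u : G} {v : T} : Quotient.mk (attachSetoid g t) (.inl u) =
    Quotient.mk (attachSetoid g t) (.inr v) ↔ u = g ∧ v = t :=
  Quotient.eq.trans <| attachRel_iff.trans <| by simp

@[simp] theorem mk_inr_eq_mk_inl {u : T} {v : G} : Quotient.mk (attachSetoid g t) (.inr u) =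
    Quotient.mk (attachSetoid g t) (.inl v) ↔ u = t ∧ v = g :=
  Quotient.eq.trans <| attachRel_iff.trans <| by simp

@[simp] theorem mk_inr_eq_mk_inr {u v : T} : Quotient.mk (attachSetoid g t) (.inr u) =
    Quotient.mk (attachSetoid g t) (.inr v) ↔ u = v :=
  Quotient.eq.trans <| attachRel_iff.trans <| by simp

end Attachment

section AttachPresentation

variable {G T : Type*} {LG LT : Set ℕ} {φG : ℕ → G} {φT : ℕ → T} {m₀ n₀ : ℕ}

def attachRep (φG : ℕ → G) (φT : ℕ → T) (m₀ n₀ : ℕ) (x : ℕ ⊕ ℕ) :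
    Quotient (attachSetoid (φG m₀) (φT n₀)) :=
  Quotient.mk _ (Sum.map φG φT x)

theorem blockRegular_attachRep_eq
    (hEG : RegularRel fun m n => m ∈ LG ∧ n ∈ LG ∧ φG m = φG n)
    (hET : RegularRel fun m n => m ∈ LT ∧ n ∈ LT ∧ φT m = φT n)
    (hm₀ : m₀ ∈ LG) (hn₀ : n₀ ∈ LT) :
    BlockRegular fun x y => x ∈ Sum.inl '' LG ∪ Sum.inr '' LT ∧
      y ∈ Sum.inl '' LG ∪ Sum.inr '' LT ∧
      attachRep φG φT m₀ n₀ x = attachRep φG φT m₀ n₀ y := by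
  have hG₀ := hEG.isRegular_unaryLang_fst m₀
  have hT₀ := hET.isRegular_unaryLang_fst n₀
  refine ⟨hEG.congr fun a b => ?_, (regularRel_mem_and_mem hG₀ hT₀).congr fun a b => ?_,
    (regularRel_mem_and_mem hT₀ hG₀).congr fun a b => ?_, hET.congr fun a b => ?_⟩ <;>
  simp [attachRep, hm₀, hn₀] <;> tauto

theorem blockRegular_attachRep_edge {γ : G → G → Prop} {η : T → T → Prop}
    (hEG : RegularRel fun m n => m ∈ LG ∧ n ∈ LG ∧ φG m = φG n)
    (hET : RegularRel fun m n => m ∈ LT ∧ n ∈ LT ∧ φT m = φT n)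
    (hγ : RegularRel fun m n => m ∈ LG ∧ n ∈ LG ∧ γ (φG m) (φG n))
    (hη : RegularRel fun m n => m ∈ LT ∧ n ∈ LT ∧ η (φT m) (φT n))
    (hm₀ : m₀ ∈ LG) (hn₀ : n₀ ∈ LT) :
    BlockRegular fun x y => x ∈ Sum.inl '' LG ∪ Sum.inr '' LT ∧
      y ∈ Sum.inl '' LG ∪ Sum.inr '' LT ∧
      attachEdge γ η _ _ (attachRep φG φT m₀ n₀ x) (attachRep φG φT m₀ n₀ y) := by
  have hG₀ := hEG.isRegular_unaryLang_fst m₀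
  have hT₀ := hET.isRegular_unaryLang_fst n₀
  -- an edge within `G` is a `γ`-edge or the `η`-loop at the glued vertex; an edge between `G`
  -- and `T` has the glued vertex as one end
  refine ⟨?_, ?_, ?_, ?_⟩
  · refine (hγ.or (regularRel_mem_and_mem
      (isRegular_unaryLang_and_const hG₀ (η (φT n₀) (φT n₀))) hG₀)).congr fun a b => ?_
    simp [attachRep, attachEdge, hm₀]
    tauto
  · refine ((regularRel_mem_and_mem (hγ.isRegular_unaryLang_fst m₀) hT₀).or
      (regularRel_mem_and_mem hG₀ (hη.isRegular_unaryLang_snd n₀))).congr fun a b => ?_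
    simp [attachRep, attachEdge, hm₀, hn₀]
    tauto
  · refine ((regularRel_mem_and_mem hT₀ (hγ.isRegular_unaryLang_snd m₀)).or
      (regularRel_mem_and_mem (hη.isRegular_unaryLang_fst n₀) hG₀)).congr fun a b => ?_
    simp [attachRep, attachEdge, hm₀, hn₀]
    tauto
  · refine (hη.or (regularRel_mem_and_mem
      (isRegular_unaryLang_and_const hT₀ (γ (φG m₀) (φG m₀))) hT₀)).congr fun a b => ?_
    simp [attachRep, attachEdge, hn₀]
    tauto

end AttachPresentation

theorem stmt7_general {G T : Type*}
    (γ : G → G → Prop) (η : T → T → Prop)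
    (hG : UnaryFAPresentable γ) (hT : UnaryFAPresentable η)
    (g : G) (t : T) :
    UnaryFAPresentable (attachEdge γ η g t) := by
  obtain ⟨LG, hLG, φG, hφG, hEG, hγ⟩ := hG
  obtain ⟨LT, hLT, φT, hφT, hET, hη⟩ := hT
  obtain ⟨m₀, hm₀, rfl⟩ := hφG g
  obtain ⟨n₀, hn₀, rfl⟩ := hφT t
  refine unaryFAPresentable_of_sum hLG hLT (attachRep φG φT m₀ n₀) ?_
    (blockRegular_attachRep_eq hEG hET hm₀ hn₀)
    (blockRegular_attachRep_edge hEG hET hγ hη hm₀ hn₀)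
  rintro ⟨u | v⟩
  · obtain ⟨a, ha, rfl⟩ := hφG u
    exact ⟨.inl a, by simpa using ha, rfl⟩
  · obtain ⟨b, hb, rfl⟩ := hφT v
    exact ⟨.inr b, by simpa using hb, rfl⟩

theorem stmt7 {G T : Type*} [Countable G] [Countable T]
    (γ : G → G → Prop) (η : T → T → Prop)
    (hG : UnaryFAPresentable γ) (hT : UnaryFAPresentable η)
    (g : G) (t : T) :
    UnaryFAPresentable (attachEdge γ η g t) :=
  stmt7_general γ η hG hT g t
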